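/- arXiv:1710.06752 — 3 statements merged into one kernel-verified Lean document; each statement's English description precedes it below -/
import Mathlib

section
/- Let H ≥ 2 and t ≥ 0 be integers, and let A, B, C be pairwise disjoint finite sets with |A| = |B| = H−2 and |C| = C(H−2, 2). Then, as rational numbers, ∑_{W ⊆ A∪B∪C, |W| = t} 1/(1 + max(|W∩A|, |W∩B|)) = X(H,t). -/
open Finset

/-- Binomial coefficient `C(n, m)` with integer lower argument, with the
convention that it is `0` when `m < 0` (and, as usual, when `m > n`). -/
def chooseInt (n : ℕ) (m : ℤ) : ℕ := if 0 ≤ m then n.choose m.toNat else 0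

/-- The rational number `X(H, t)` from Theorem 1 (SRDS max link-load for `r = 2`). -/
def X (H t : ℕ) : ℚ :=
  (∑ b1 ∈ Finset.range (min t (H - 2) + 1),
      (1 / ((b1 : ℚ) + 1)) * ((H - 2).choose b1 : ℚ) ^ 2 *
        (chooseInt ((H - 2).choose 2) ((t : ℤ) - 2 * b1) : ℚ))
  + ∑ b1 ∈ Finset.range (min t (H - 2) + 1), ∑ b2 ∈ Finset.range b1,
      (2 / ((b1 : ℚ) + 1)) * ((H - 2).choose b1 : ℚ) * ((H - 2).choose b2 : ℚ) *
        (chooseInt ((H - 2).choose 2) ((t : ℤ) - b1 - b2) : ℚ)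

lemma sum_powerset_union_disjoint {α : Type*} [DecidableEq α] {A B : Finset α}
    (h : Disjoint A B) (f : Finset α → ℚ) :
    ∑ W ∈ (A ∪ B).powerset, f W = ∑ S ∈ A.powerset, ∑ T ∈ B.powerset, f (S ∪ T) := by
  rw [← Finset.sum_product']
  refine Finset.sum_nbij' (fun W => (W ∩ A, W ∩ B)) (fun p => p.1 ∪ p.2) ?_ ?_ ?_ ?_ ?_
  · intro W hW
    simp only [Finset.mem_product, Finset.mem_powerset]
    exact ⟨inter_subset_right, inter_subset_right⟩
  · intro p hp
    simp only [Finset.mem_product, Finset.mem_powerset] at hp ⊢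
    exact Finset.union_subset_union hp.1 hp.2
  · intro W hW
    rw [Finset.mem_powerset] at hW
    show W ∩ A ∪ W ∩ B = W
    rw [← Finset.inter_union_distrib_left, Finset.inter_eq_left.2 hW]
  · intro p hp
    simp only [Finset.mem_product, Finset.mem_powerset] at hp
    have h1 : p.1 ∩ A = p.1 := Finset.inter_eq_left.2 hp.1
    have h2 : p.2 ∩ A = ∅ := Finset.disjoint_iff_inter_eq_empty.1 ((h.symm.mono_left hp.2))
    have h3 : p.1 ∩ B = ∅ := Finset.disjoint_iff_inter_eq_empty.1 (h.mono_left hp.1)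
    have h4 : p.2 ∩ B = p.2 := Finset.inter_eq_left.2 hp.2
    cases p
    simp [Finset.union_inter_distrib_right, h1, h2, h3, h4]
  · intro W hW
    rw [Finset.mem_powerset] at hW
    show f W = f (W ∩ A ∪ W ∩ B)
    rw [← Finset.inter_union_distrib_left, Finset.inter_eq_left.2 hW]

lemma sum_powerset_card' {α : Type*} (A : Finset α) (f : ℕ → ℚ) :
    ∑ S ∈ A.powerset, f S.card = ∑ a ∈ range (A.card + 1), (A.card.choose a : ℚ) * f a := by
  rw [Finset.sum_powerset_apply_card]
  exact Finset.sum_congr rfl fun a _ => by rw [nsmul_eq_mul]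

lemma triple_card {α : Type*} (A B C : Finset α) (g : ℕ → ℕ → ℕ → ℚ) :
    ∑ S ∈ A.powerset, ∑ T ∈ B.powerset, ∑ U ∈ C.powerset, g S.card T.card U.card
      = ∑ a ∈ range (A.card + 1), (A.card.choose a : ℚ) *
          ∑ b ∈ range (B.card + 1), (B.card.choose b : ℚ) *
            ∑ c ∈ range (C.card + 1), (C.card.choose c : ℚ) * g a b c := by
  refine (sum_powerset_card' A
    (fun a => ∑ T ∈ B.powerset, ∑ U ∈ C.powerset, g a T.card U.card)).trans ?_
  refine Finset.sum_congr rfl fun a _ => congrArg _ ?_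
  refine (sum_powerset_card' B
    (fun b => ∑ U ∈ C.powerset, g a b U.card)).trans ?_
  exact Finset.sum_congr rfl fun b _ => congrArg _ (sum_powerset_card' C (fun c => g a b c))

lemma collapse (N a b t : ℕ) (x : ℚ) :
    ∑ c ∈ range (N + 1), (N.choose c : ℚ) * (if a + b + c = t then x else 0)
      = (chooseInt N ((t : ℤ) - a - b) : ℚ) * x := by
  by_cases h : a + b ≤ t
  · have hm : (0:ℤ) ≤ (t:ℤ) - a - b := by omega
    have hmt : ((t:ℤ) - a - b).toNat = t - a - b := by omega
    rw [chooseInt, if_pos hm, hmt]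
    by_cases hN : t - a - b ≤ N
    · rw [Finset.sum_eq_single (t - a - b)]
      · rw [if_pos (by omega)]
      · intro c _ hne; rw [if_neg (by omega), mul_zero]
      · intro hc; exact absurd (Finset.mem_range.2 (by omega)) hc
    · rw [Nat.choose_eq_zero_of_lt (by omega), Nat.cast_zero, zero_mul]
      apply Finset.sum_eq_zero
      intro c hc
      rw [Finset.mem_range] at hc
      rw [if_neg (by omega), mul_zero]
  · rw [chooseInt, if_neg (by omega), Nat.cast_zero, zero_mul]
    apply Finset.sum_eq_zero
    intro c _
    rw [if_neg (by omega), mul_zero]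

lemma key (n N t : ℕ) :
    ∑ a ∈ range (n + 1), ∑ b ∈ range (n + 1),
        (1 / (1 + ((max a b : ℕ) : ℚ))) * (n.choose a : ℚ) * (n.choose b : ℚ) *
          (chooseInt N ((t : ℤ) - a - b) : ℚ)
      = (∑ b1 ∈ Finset.range (min t n + 1),
          (1 / ((b1 : ℚ) + 1)) * (n.choose b1 : ℚ) ^ 2 *
            (chooseInt N ((t : ℤ) - 2 * b1) : ℚ))
        + ∑ b1 ∈ Finset.range (min t n + 1), ∑ b2 ∈ Finset.range b1,
            (2 / ((b1 : ℚ) + 1)) * (n.choose b1 : ℚ) * (n.choose b2 : ℚ) *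
              (chooseInt N ((t : ℤ) - b1 - b2) : ℚ) := by
  set F : ℕ → ℕ → ℚ := fun a b =>
    (1 / (1 + ((max a b : ℕ) : ℚ))) * (n.choose a : ℚ) * (n.choose b : ℚ) *
      (chooseInt N ((t : ℤ) - a - b) : ℚ) with hF
  have split : ∀ a b : ℕ, F a b =
      (if b < a then F a b else 0) + ((if a = b then F a b else 0) +
        (if a < b then F a b else 0)) := by
    intro a b
    rcases lt_trichotomy a b with h | h | h
    · rw [if_neg (by omega), if_neg (by omega), if_pos h]; ring
    · rw [if_neg (by omega), if_pos h, if_neg (by omega)]; ring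
    · rw [if_pos h, if_neg (by omega), if_neg (by omega)]; ring
  have filt : ∀ a, a ∈ range (n+1) → (range (n+1)).filter (fun b => b < a) = range a := by
    intro a ha
    rw [Finset.mem_range] at ha
    ext x
    simp only [Finset.mem_filter, Finset.mem_range]
    omega
  have hsplit_b : ∀ a ∈ range (n+1), ∑ b ∈ range (n+1), F a b
      = (∑ b ∈ range a, F a b) + (F a a +
          ∑ b ∈ range (n+1), (if a < b then F a b else 0)) := by
    intro a ha
    rw [Finset.sum_congr rfl (fun b _ => split a b), Finset.sum_add_distrib]
    congr 1
    · rw [← Finset.sum_filter, filt a ha]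
    · rw [Finset.sum_add_distrib]
      congr 1
      rw [Finset.sum_ite_eq (range (n+1)) a (F a), if_pos ha]
  have hmain : ∑ a ∈ range (n + 1), ∑ b ∈ range (n + 1), F a b
      = (∑ a ∈ range (n + 1), F a a)
        + ∑ a ∈ range (n + 1), ∑ b ∈ range a, (F a b + F b a) := by
    rw [Finset.sum_congr rfl hsplit_b, Finset.sum_add_distrib, Finset.sum_add_distrib]
    have hupper : ∑ a ∈ range (n+1), ∑ b ∈ range (n+1), (if a < b then F a b else 0)
        = ∑ a ∈ range (n+1), ∑ b ∈ range a, F b a := by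
      rw [Finset.sum_comm]
      exact Finset.sum_congr rfl fun b hb => by rw [← Finset.sum_filter, filt b hb]
    rw [hupper]
    have hcomb : ∑ a ∈ range (n+1), ∑ b ∈ range a, (F a b + F b a)
        = (∑ a ∈ range (n+1), ∑ b ∈ range a, F a b)
          + ∑ a ∈ range (n+1), ∑ b ∈ range a, F b a := by
      rw [← Finset.sum_add_distrib]
      exact Finset.sum_congr rfl fun a _ => Finset.sum_add_distrib
    rw [hcomb]
    ring
  rw [hmain]
  have hdiag : ∑ a ∈ range (n + 1), F a a
      = ∑ b1 ∈ range (min t n + 1),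
          (1 / ((b1 : ℚ) + 1)) * (n.choose b1 : ℚ) ^ 2 *
            (chooseInt N ((t : ℤ) - 2 * b1) : ℚ) := by
    have hFaa : ∀ a : ℕ, F a a = (1 / ((a : ℚ) + 1)) * (n.choose a : ℚ) ^ 2 *
        (chooseInt N ((t : ℤ) - 2 * a) : ℚ) := by
      intro a
      rw [hF]
      simp only [max_self]
      have : (t : ℤ) - a - a = (t : ℤ) - 2 * a := by ring
      rw [this]
      ring
    rw [Finset.sum_congr rfl fun a _ => hFaa a]
    refine (Finset.sum_subset ?_ ?_).symm
    · exact Finset.range_subset_range.2 (by omega)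
    · intro a _ ha
      rw [Finset.mem_range, Nat.lt_succ_iff, Nat.not_le] at ha
      have ht : t < a ∨ n < a := by omega
      rcases ht with h | h
      · rw [chooseInt, if_neg (by omega), Nat.cast_zero, mul_zero]
      · rw [Nat.choose_eq_zero_of_lt h, Nat.cast_zero]; ring
  have hoff : ∑ a ∈ range (n + 1), ∑ b ∈ range a, (F a b + F b a)
      = ∑ b1 ∈ range (min t n + 1), ∑ b2 ∈ range b1,
          (2 / ((b1 : ℚ) + 1)) * (n.choose b1 : ℚ) * (n.choose b2 : ℚ) *
            (chooseInt N ((t : ℤ) - b1 - b2) : ℚ) := by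
    have hterm : ∀ a b : ℕ, b < a → F a b + F b a
        = (2 / ((a : ℚ) + 1)) * (n.choose a : ℚ) * (n.choose b : ℚ) *
            (chooseInt N ((t : ℤ) - a - b) : ℚ) := by
      intro a b hba
      rw [hF]
      simp only [max_eq_left hba.le, max_eq_right hba.le]
      have : (t : ℤ) - b - a = (t : ℤ) - a - b := by ring
      rw [this]
      ring
    rw [Finset.sum_congr rfl fun a _ => Finset.sum_congr rfl fun b hb =>
      hterm a b (Finset.mem_range.1 hb)]
    refine (Finset.sum_subset ?_ ?_).symm
    · exact Finset.range_subset_range.2 (by omega)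
    · intro a _ ha
      rw [Finset.mem_range, Nat.lt_succ_iff, Nat.not_le] at ha
      have ht : t < a ∨ n < a := by omega
      apply Finset.sum_eq_zero
      intro b hb
      rw [Finset.mem_range] at hb
      rcases ht with h | h
      · rw [chooseInt, if_neg (by omega), Nat.cast_zero, mul_zero]
      · rw [Nat.choose_eq_zero_of_lt h, Nat.cast_zero]; ring
  rw [hdiag, hoff]

theorem stmt_0 {α : Type*} [DecidableEq α] (H t : ℕ) (hH : 2 ≤ H)
    (A B C : Finset α)
    (hAB : Disjoint A B) (hAC : Disjoint A C) (hBC : Disjoint B C)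
    (hA : A.card = H - 2) (hB : B.card = H - 2) (hC : C.card = (H - 2).choose 2) :
    ∑ W ∈ (A ∪ B ∪ C).powerset.filter (fun W => W.card = t),
      (1 : ℚ) / (1 + (max (W ∩ A).card (W ∩ B).card : ℚ)) = X H t := by
  have hABC : Disjoint (A ∪ B) C := Finset.disjoint_union_left.2 ⟨hAC, hBC⟩
  calc ∑ W ∈ (A ∪ B ∪ C).powerset.filter (fun W => W.card = t),
        (1 : ℚ) / (1 + (max (W ∩ A).card (W ∩ B).card : ℚ))
      = ∑ W ∈ (A ∪ B ∪ C).powerset,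
          (if W.card = t then
            (1 : ℚ) / (1 + (max (W ∩ A).card (W ∩ B).card : ℚ)) else 0) := by
        rw [Finset.sum_filter]
    _ = ∑ S ∈ A.powerset, ∑ T ∈ B.powerset, ∑ U ∈ C.powerset,
          (if (S ∪ T ∪ U).card = t then
            (1 : ℚ) / (1 + (max ((S ∪ T ∪ U) ∩ A).card ((S ∪ T ∪ U) ∩ B).card : ℚ))
          else 0) := by
        rw [sum_powerset_union_disjoint hABC, sum_powerset_union_disjoint hAB]
    _ = ∑ S ∈ A.powerset, ∑ T ∈ B.powerset, ∑ U ∈ C.powerset,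
          (if S.card + T.card + U.card = t then
            (1 : ℚ) / (1 + ((max S.card T.card : ℕ) : ℚ)) else 0) := by
        refine Finset.sum_congr rfl fun S hS => Finset.sum_congr rfl fun T hT =>
          Finset.sum_congr rfl fun U hU => ?_
        rw [Finset.mem_powerset] at hS hT hU
        have dST : Disjoint S T := hAB.mono hS hT
        have dSU : Disjoint S U := hAC.mono hS hU
        have dTU : Disjoint T U := hBC.mono hT hU
        have hcard : (S ∪ T ∪ U).card = S.card + T.card + U.card := by
          rw [Finset.card_union_of_disjoint (Finset.disjoint_union_left.2 ⟨dSU, dTU⟩),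
            Finset.card_union_of_disjoint dST]
        have hIA : (S ∪ T ∪ U) ∩ A = S := by
          rw [Finset.union_inter_distrib_right, Finset.union_inter_distrib_right,
            Finset.inter_eq_left.2 hS,
            Finset.disjoint_iff_inter_eq_empty.1 (hAB.symm.mono_left hT),
            Finset.disjoint_iff_inter_eq_empty.1 (hAC.symm.mono_left hU)]
          simp
        have hIB : (S ∪ T ∪ U) ∩ B = T := by
          rw [Finset.union_inter_distrib_right, Finset.union_inter_distrib_right,
            Finset.inter_eq_left.2 hT,
            Finset.disjoint_iff_inter_eq_empty.1 (hAB.mono_left hS),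
            Finset.disjoint_iff_inter_eq_empty.1 (hBC.symm.mono_left hU)]
          simp
        rw [hcard, hIA, hIB, Nat.cast_max]
    _ = ∑ a ∈ range (A.card + 1), (A.card.choose a : ℚ) *
          ∑ b ∈ range (B.card + 1), (B.card.choose b : ℚ) *
            ∑ c ∈ range (C.card + 1), (C.card.choose c : ℚ) *
              (if a + b + c = t then (1 : ℚ) / (1 + ((max a b : ℕ) : ℚ)) else 0) :=
        triple_card A B C (fun a b c =>
          if a + b + c = t then (1 : ℚ) / (1 + ((max a b : ℕ) : ℚ)) else 0)
    _ = ∑ a ∈ range (A.card + 1), ∑ b ∈ range (B.card + 1),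
          (1 / (1 + ((max a b : ℕ) : ℚ))) * (A.card.choose a : ℚ) * (B.card.choose b : ℚ) *
            (chooseInt C.card ((t : ℤ) - a - b) : ℚ) := by
        refine Finset.sum_congr rfl fun a _ => ?_
        rw [Finset.mul_sum]
        refine Finset.sum_congr rfl fun b _ => ?_
        rw [collapse C.card a b t]
        ring
    _ = X H t := by
        rw [hA, hB, hC]
        exact key (H - 2) ((H - 2).choose 2) t
end

section
/- Let H ≥ 2 and t ≥ 0 be integers, let h and h' be two distinct elements of Fin H, and let k = {h, h'}. Then, as rational numbers, the sum over all sets W consisting of exactly t two-element subsets of Fin H with k ∉ W of 1/(1 + max(|W ∩ U_h|, |W ∩ U_{h'}|)) equals X(H,t). -/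
open Finset

/-- The users of a combination network with `r = 2`: the 2-element subsets of `Fin H`. -/
def users (H : ℕ) : Finset (Finset (Fin H)) := Finset.univ.filter (fun s => s.card = 2)

/-- `U H h`: the set of users (2-element subsets of `Fin H`) connected to relay `h`,
i.e., containing `h`. -/
def U (H : ℕ) (h : Fin H) : Finset (Finset (Fin H)) := (users H).filter (fun s => h ∈ s)

/- ### Auxiliary lemmas -/

lemma aux_sum_powerset_card {α : Type*} [DecidableEq α] (A : Finset α) (F : ℕ → ℚ) :
    ∑ x ∈ A.powerset, F x.card
      = ∑ a ∈ Finset.range (A.card + 1), (A.card.choose a : ℚ) * F a := by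
  rw [Finset.sum_powerset]
  refine Finset.sum_congr rfl fun j _ => ?_
  have : ∀ x ∈ A.powersetCard j, F x.card = F j := by
    intro x hx
    rw [(Finset.mem_powersetCard.mp hx).2]
  rw [Finset.sum_congr rfl this, Finset.sum_const, Finset.card_powersetCard, nsmul_eq_mul]

lemma aux_sum_powerset_ite {α : Type*} [DecidableEq α] (C : Finset α) (m : ℤ) (c : ℚ) :
    ∑ z ∈ C.powerset, (if (z.card : ℤ) = m then c else 0)
      = (chooseInt C.card m : ℚ) * c := by
  rw [aux_sum_powerset_card C (fun j => if (j : ℤ) = m then c else 0)]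
  unfold chooseInt
  by_cases hm : 0 ≤ m
  · rw [if_pos hm]
    by_cases hle : m.toNat ≤ C.card
    · rw [Finset.sum_eq_single m.toNat]
      · rw [if_pos (by omega)]
      · intro b _ hb
        rw [if_neg (by omega), mul_zero]
      · intro hmem
        exact absurd (Finset.mem_range.mpr (by omega)) hmem
    · rw [Nat.choose_eq_zero_of_lt (by omega), Nat.cast_zero, zero_mul]
      apply Finset.sum_eq_zero
      intro b hb
      rw [Finset.mem_range] at hb
      rw [if_neg (by omega), mul_zero]
  · rw [if_neg hm, Nat.cast_zero, zero_mul]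
    apply Finset.sum_eq_zero
    intro b _
    rw [if_neg (by omega), mul_zero]

/-- Splitting a sum over the powerset of a disjoint triple union. -/
lemma aux_sum_powerset_three {α : Type*} [DecidableEq α] (A B C : Finset α)
    (hAB : Disjoint A B) (hAC : Disjoint A C) (hBC : Disjoint B C)
    (f : Finset α → Finset α → Finset α → ℚ) :
    ∑ W ∈ (A ∪ B ∪ C).powerset, f (W ∩ A) (W ∩ B) (W ∩ C)
      = ∑ x ∈ A.powerset, ∑ y ∈ B.powerset, ∑ z ∈ C.powerset, f x y z := by
  rw [← Finset.sum_product', ← Finset.sum_product']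
  refine Finset.sum_nbij' (fun W => ((W ∩ A, W ∩ B), W ∩ C))
    (fun p => p.1.1 ∪ p.1.2 ∪ p.2) ?_ ?_ ?_ ?_ ?_
  · intro W hW
    simp only [Finset.mem_product, Finset.mem_powerset]
    exact ⟨⟨Finset.inter_subset_right, Finset.inter_subset_right⟩, Finset.inter_subset_right⟩
  · intro p hp
    simp only [Finset.mem_product, Finset.mem_powerset] at hp ⊢
    exact Finset.union_subset (Finset.union_subset
      (hp.1.1.trans (Finset.subset_union_left.trans Finset.subset_union_left))
      (hp.1.2.trans ((Finset.subset_union_right).trans Finset.subset_union_left)))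
      (hp.2.trans Finset.subset_union_right)
  · intro W hW
    simp only [Finset.mem_powerset] at hW
    show W ∩ A ∪ W ∩ B ∪ W ∩ C = W
    rw [← Finset.inter_union_distrib_left, ← Finset.inter_union_distrib_left]
    exact Finset.inter_eq_left.mpr hW
  · intro p hp
    obtain ⟨⟨x, y⟩, z⟩ := p
    simp only [Finset.mem_product, Finset.mem_powerset] at hp
    obtain ⟨⟨hx, hy⟩, hz⟩ := hp
    show (((x ∪ y ∪ z) ∩ A, (x ∪ y ∪ z) ∩ B), (x ∪ y ∪ z) ∩ C) = ((x, y), z)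
    have h1 : (x ∪ y ∪ z) ∩ A = x := by
      rw [Finset.union_inter_distrib_right, Finset.union_inter_distrib_right,
        Finset.inter_eq_left.mpr hx, Finset.disjoint_iff_inter_eq_empty.mp (hAB.symm.mono_left hy),
        Finset.disjoint_iff_inter_eq_empty.mp (hAC.symm.mono_left hz), Finset.union_empty, Finset.union_empty]
    have h2 : (x ∪ y ∪ z) ∩ B = y := by
      rw [Finset.union_inter_distrib_right, Finset.union_inter_distrib_right,
        Finset.inter_eq_left.mpr hy, Finset.disjoint_iff_inter_eq_empty.mp (hAB.mono_left hx),
        Finset.disjoint_iff_inter_eq_empty.mp (hBC.symm.mono_left hz), Finset.empty_union, Finset.union_empty]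
    have h3 : (x ∪ y ∪ z) ∩ C = z := by
      rw [Finset.union_inter_distrib_right, Finset.union_inter_distrib_right,
        Finset.inter_eq_left.mpr hz, Finset.disjoint_iff_inter_eq_empty.mp (hAC.mono_left hx),
        Finset.disjoint_iff_inter_eq_empty.mp (hBC.mono_left hy), Finset.empty_union, Finset.empty_union]
    rw [h1, h2, h3]
  · intro W hW
    rfl

/-- The symmetric double-sum decomposition. -/
lemma aux_double_sum (T : ℕ → ℕ → ℚ) (hT : ∀ a b, T a b = T b a) (N : ℕ) :
    ∑ a ∈ Finset.range N, ∑ b ∈ Finset.range N,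
        (1 / (1 + ((max a b : ℕ) : ℚ))) * T a b
      = ∑ a ∈ Finset.range N, (1 / ((a : ℚ) + 1)) * T a a
        + ∑ a ∈ Finset.range N, ∑ b ∈ Finset.range a, (2 / ((a : ℚ) + 1)) * T a b := by
  induction N with
  | zero => simp
  | succ N ih =>
    rw [Finset.sum_range_succ, Finset.sum_range_succ (f := fun a => (1 / ((a : ℚ) + 1)) * T a a),
      Finset.sum_range_succ (f := fun a => ∑ b ∈ Finset.range a, (2 / ((a : ℚ) + 1)) * T a b)]
    have e1 : ∀ a ∈ Finset.range N, (∑ b ∈ Finset.range (N + 1),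
        (1 / (1 + ((max a b : ℕ) : ℚ))) * T a b)
        = (∑ b ∈ Finset.range N, (1 / (1 + ((max a b : ℕ) : ℚ))) * T a b)
          + (1 / ((N : ℚ) + 1)) * T a N := by
      intro a ha
      rw [Finset.mem_range] at ha
      rw [Finset.sum_range_succ, Nat.max_eq_right (by omega), add_comm (1 : ℚ) (N : ℚ)]
    rw [Finset.sum_congr rfl e1, Finset.sum_add_distrib, ih]
    have e2 : ∑ b ∈ Finset.range (N + 1), (1 / (1 + ((max N b : ℕ) : ℚ))) * T N b
        = (1 / ((N : ℚ) + 1)) * T N N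
          + ∑ b ∈ Finset.range N, (1 / ((N : ℚ) + 1)) * T N b := by
      rw [Finset.sum_range_succ, Nat.max_self, add_comm (1 : ℚ) (N : ℚ), add_comm]
      congr 1
      refine Finset.sum_congr rfl fun b hb => ?_
      rw [Finset.mem_range] at hb
      rw [Nat.max_eq_left (by omega), add_comm (1 : ℚ) (N : ℚ)]
    rw [e2]
    have e3 : ∑ a ∈ Finset.range N, (1 / ((N : ℚ) + 1)) * T a N
        = ∑ b ∈ Finset.range N, (1 / ((N : ℚ) + 1)) * T N b := by
      refine Finset.sum_congr rfl fun a _ => by rw [hT]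
    rw [e3]
    ring_nf
    rw [Finset.sum_mul]

lemma chooseInt_neg (n : ℕ) (m : ℤ) (hm : m < 0) : chooseInt n m = 0 := by
  rw [chooseInt, if_neg (by omega)]

lemma aux_final (n c t : ℕ) :
    ∑ a ∈ Finset.range (n + 1), (n.choose a : ℚ) *
        ∑ b ∈ Finset.range (n + 1), (n.choose b : ℚ) *
          ((chooseInt c ((t : ℤ) - a - b) : ℚ) * ((1 : ℚ) / (1 + ((max a b : ℕ) : ℚ))))
      = (∑ b1 ∈ Finset.range (min t n + 1),
            (1 / ((b1 : ℚ) + 1)) * (n.choose b1 : ℚ) ^ 2 *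
              (chooseInt c ((t : ℤ) - 2 * b1) : ℚ))
        + ∑ b1 ∈ Finset.range (min t n + 1), ∑ b2 ∈ Finset.range b1,
            (2 / ((b1 : ℚ) + 1)) * (n.choose b1 : ℚ) * (n.choose b2 : ℚ) *
              (chooseInt c ((t : ℤ) - b1 - b2) : ℚ) := by
  have hsub : Finset.range (min t n + 1) ⊆ Finset.range (n + 1) := by
    apply Finset.range_subset_range.mpr; omega
  have key := aux_double_sum
    (fun a b => (n.choose a : ℚ) * (n.choose b : ℚ) * (chooseInt c ((t : ℤ) - a - b) : ℚ))
    (fun a b => by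
      have h1 : (t : ℤ) - a - b = (t : ℤ) - b - a := by ring
      simp only [h1]; ring) (n + 1)
  have lhs_eq : ∑ a ∈ Finset.range (n + 1), (n.choose a : ℚ) *
        ∑ b ∈ Finset.range (n + 1), (n.choose b : ℚ) *
          ((chooseInt c ((t : ℤ) - a - b) : ℚ) * ((1 : ℚ) / (1 + ((max a b : ℕ) : ℚ))))
      = ∑ a ∈ Finset.range (n + 1), ∑ b ∈ Finset.range (n + 1),
          (1 / (1 + ((max a b : ℕ) : ℚ))) *
            ((n.choose a : ℚ) * (n.choose b : ℚ) * (chooseInt c ((t : ℤ) - a - b) : ℚ)) := by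
    refine Finset.sum_congr rfl fun a _ => ?_
    rw [Finset.mul_sum]
    exact Finset.sum_congr rfl fun b _ => by ring
  rw [lhs_eq, key]
  congr 1
  · rw [Finset.sum_subset hsub]
    · refine Finset.sum_congr rfl fun a _ => ?_
      have h1 : (t : ℤ) - a - a = (t : ℤ) - 2 * a := by ring
      simp only [h1]; ring
    · intro a ha hna
      rw [Finset.mem_range] at ha
      rw [Finset.mem_range] at hna
      rw [chooseInt_neg _ _ (by omega)]
      simp
  · rw [Finset.sum_subset hsub]
    · refine Finset.sum_congr rfl fun a _ => Finset.sum_congr rfl fun b _ => by ring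
    · intro a ha hna
      rw [Finset.mem_range] at ha
      rw [Finset.mem_range] at hna
      apply Finset.sum_eq_zero
      intro b hb
      rw [Finset.mem_range] at hb
      rw [chooseInt_neg _ _ (by omega)]
      simp

lemma aux_pair_card {H : ℕ} {h h' : Fin H} (hne : h ≠ h') :
    ({h, h'} : Finset (Fin H)).card = 2 := by
  rw [Finset.card_insert_of_notMem (by simpa using hne), Finset.card_singleton]

lemma aux_T0_card {H : ℕ} {h h' : Fin H} (hne : h ≠ h') :
    ((Finset.univ : Finset (Fin H)) \ {h, h'}).card = H - 2 := by
  rw [Finset.card_sdiff_of_subset (Finset.subset_univ _), Finset.card_univ, Fintype.card_fin,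
    aux_pair_card hne]

lemma aux_cardA {H : ℕ} (h h' : Fin H) (hne : h ≠ h') (A : Finset (Finset (Fin H)))
    (hA : ∀ s, s ∈ A ↔ s.card = 2 ∧ s ≠ {h, h'} ∧ h ∈ s) : A.card = H - 2 := by
  rw [← aux_T0_card hne]
  symm
  apply Finset.card_bij (fun x _ => insert h {x})
  · intro x hx
    simp only [Finset.mem_sdiff, Finset.mem_univ, Finset.mem_insert, Finset.mem_singleton,
      true_and] at hx
    push_neg at hx
    rw [hA]
    refine ⟨?_, ?_, Finset.mem_insert_self _ _⟩
    · rw [Finset.card_insert_of_notMem (by simpa using (Ne.symm hx.1)), Finset.card_singleton]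
    · intro e
      have : x ∈ ({h, h'} : Finset (Fin H)) := by
        rw [← e]; simp
      simp only [Finset.mem_insert, Finset.mem_singleton] at this
      tauto
  · intro a ha b hb e
    have : a ∈ insert h ({b} : Finset (Fin H)) := by rw [← e]; simp
    simp only [Finset.mem_insert, Finset.mem_singleton] at this
    simp only [Finset.mem_sdiff, Finset.mem_univ, Finset.mem_insert, Finset.mem_singleton,
      true_and] at ha
    push_neg at ha
    rcases this with h1 | h1
    · exact absurd h1 ha.1
    · exact h1
  · intro s hs
    rw [hA] at hs
    obtain ⟨hcard, hnk, hmem⟩ := hs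
    obtain ⟨a, b, hab, rfl⟩ := Finset.card_eq_two.mp hcard
    simp only [Finset.mem_insert, Finset.mem_singleton] at hmem
    rcases hmem with rfl | rfl
    · refine ⟨b, ?_, rfl⟩
      simp only [Finset.mem_sdiff, Finset.mem_univ, Finset.mem_insert, Finset.mem_singleton,
        true_and]
      push_neg
      refine ⟨Ne.symm hab, ?_⟩
      intro e
      exact hnk (by rw [e])
    · refine ⟨a, ?_, by rw [Finset.pair_comm]⟩
      simp only [Finset.mem_sdiff, Finset.mem_univ, Finset.mem_insert, Finset.mem_singleton,
        true_and]
      push_neg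
      refine ⟨hab, ?_⟩
      intro e
      exact hnk (by rw [e, Finset.pair_comm])
  
lemma aux_cardC {H : ℕ} (h h' : Fin H) (hne : h ≠ h') (C : Finset (Finset (Fin H)))
    (hC : ∀ s, s ∈ C ↔ s.card = 2 ∧ s ≠ {h, h'} ∧ h ∉ s ∧ h' ∉ s) :
    C.card = (H - 2).choose 2 := by
  have : C = ((Finset.univ : Finset (Fin H)) \ {h, h'}).powersetCard 2 := by
    ext s
    rw [hC, Finset.mem_powersetCard]
    constructor
    · rintro ⟨hcard, -, hh, hh'⟩
      refine ⟨fun a ha => ?_, hcard⟩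
      simp only [Finset.mem_sdiff, Finset.mem_univ, Finset.mem_insert, Finset.mem_singleton,
        true_and]
      push_neg
      constructor <;> rintro rfl <;> [exact hh ha; exact hh' ha]
    · rintro ⟨hsub, hcard⟩
      have hh : h ∉ s := fun hh => by
        have := hsub hh; simp at this
      have hh' : h' ∉ s := fun hh' => by
        have := hsub hh'; simp at this
      refine ⟨hcard, fun e => hh ?_, hh, hh'⟩
      rw [e]; simp
  rw [this, Finset.card_powersetCard, aux_T0_card hne]

set_option maxHeartbeats 1000000 in
theorem stmt_1 (H t : ℕ) (hH : 2 ≤ H) (h h' : Fin H) (hhh' : h ≠ h')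
    (k : Finset (Fin H)) (hk : k = {h, h'}) :
    ∑ W ∈ (users H).powerset.filter (fun W => W.card = t ∧ k ∉ W),
      (1 : ℚ) / (1 + (max (W ∩ U H h).card (W ∩ U H h').card : ℚ)) = X H t := by
  classical
  set S := (users H).erase k with hS
  set A := S.filter (fun s => h ∈ s) with hA
  set B := S.filter (fun s => h' ∈ s) with hB
  set C := S.filter (fun s => h ∉ s ∧ h' ∉ s) with hC
  have memS : ∀ s, s ∈ S ↔ s.card = 2 ∧ s ≠ k := by
    intro s; rw [hS, Finset.mem_erase]; simp [users]; tauto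
  have memA : ∀ s, s ∈ A ↔ s.card = 2 ∧ s ≠ k ∧ h ∈ s := by
    intro s; rw [hA, Finset.mem_filter, memS]; tauto
  have memB : ∀ s, s ∈ B ↔ s.card = 2 ∧ s ≠ k ∧ h' ∈ s := by
    intro s; rw [hB, Finset.mem_filter, memS]; tauto
  have memC : ∀ s, s ∈ C ↔ s.card = 2 ∧ s ≠ k ∧ h ∉ s ∧ h' ∉ s := by
    intro s; rw [hC, Finset.mem_filter, memS]; tauto
  -- cardinalities
  have hAcard : A.card = H - 2 := by
    apply aux_cardA h h' hhh'
    intro s; rw [memA, hk]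
  have hBcard : B.card = H - 2 := by
    apply aux_cardA h' h (Ne.symm hhh')
    intro s; rw [memB, hk, Finset.pair_comm]
  have hCcard : C.card = (H - 2).choose 2 := by
    apply aux_cardC h h' hhh'
    intro s; rw [memC, hk]
  -- disjointness
  have hkcard : k.card = 2 := by rw [hk]; exact aux_pair_card hhh'
  have hdisjAB : Disjoint A B := by
    rw [Finset.disjoint_left]
    intro s hsA hsB
    rw [memA] at hsA
    rw [memB] at hsB
    apply hsA.2.1
    have hsub : k ⊆ s := by
      rw [hk, Finset.insert_subset_iff, Finset.singleton_subset_iff]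
      exact ⟨hsA.2.2, hsB.2.2⟩
    exact (Finset.eq_of_subset_of_card_le hsub (by rw [hsA.1, hkcard])).symm
  have hdisjAC : Disjoint A C := by
    rw [Finset.disjoint_left]
    intro s hsA hsC
    rw [memA] at hsA
    rw [memC] at hsC
    exact hsC.2.2.1 hsA.2.2
  have hdisjBC : Disjoint B C := by
    rw [Finset.disjoint_left]
    intro s hsB hsC
    rw [memB] at hsB
    rw [memC] at hsC
    exact hsC.2.2.2 hsB.2.2
  have hSABC : S = A ∪ B ∪ C := by
    refine Finset.Subset.antisymm ?_ (Finset.union_subset (Finset.union_subset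
      (Finset.filter_subset _ _) (Finset.filter_subset _ _)) (Finset.filter_subset _ _))
    intro s hs
    by_cases h1 : h ∈ s
    · exact Finset.mem_union_left _ (Finset.mem_union_left _ (Finset.mem_filter.mpr ⟨hs, h1⟩))
    by_cases h2 : h' ∈ s
    · exact Finset.mem_union_left _ (Finset.mem_union_right _ (Finset.mem_filter.mpr ⟨hs, h2⟩))
    exact Finset.mem_union_right _ (Finset.mem_filter.mpr ⟨hs, h1, h2⟩)
  -- intersections
  have hWusers : ∀ W : Finset (Finset (Fin H)), W ⊆ S → W ⊆ users H :=
    fun W hW => hW.trans (Finset.erase_subset _ _)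
  have hUA : ∀ W : Finset (Finset (Fin H)), W ⊆ S → W ∩ U H h = W ∩ A := by
    intro W hW
    rw [hA, U, Finset.inter_filter, Finset.inter_filter,
      Finset.inter_eq_left.mpr (hWusers W hW), Finset.inter_eq_left.mpr hW]
  have hUB : ∀ W : Finset (Finset (Fin H)), W ⊆ S → W ∩ U H h' = W ∩ B := by
    intro W hW
    rw [hB, U, Finset.inter_filter, Finset.inter_filter,
      Finset.inter_eq_left.mpr (hWusers W hW), Finset.inter_eq_left.mpr hW]
  have hWcard : ∀ W : Finset (Finset (Fin H)), W ⊆ S →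
      W.card = (W ∩ A).card + (W ∩ B).card + (W ∩ C).card := by
    intro W hW
    have hdec : W = (W ∩ A) ∪ (W ∩ B) ∪ (W ∩ C) := by
      rw [← Finset.inter_union_distrib_left, ← Finset.inter_union_distrib_left, ← hSABC,
        Finset.inter_eq_left.mpr hW]
    conv_lhs => rw [hdec]
    rw [Finset.card_union_of_disjoint, Finset.card_union_of_disjoint]
    · exact hdisjAB.mono Finset.inter_subset_right Finset.inter_subset_right
    · exact Finset.disjoint_union_left.mpr
        ⟨hdisjAC.mono Finset.inter_subset_right Finset.inter_subset_right,
         hdisjBC.mono Finset.inter_subset_right Finset.inter_subset_right⟩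
  -- rewrite the index set
  have hfilter : (users H).powerset.filter (fun W => W.card = t ∧ k ∉ W)
      = S.powerset.filter (fun W => W.card = t) := by
    ext W
    simp only [Finset.mem_filter, Finset.mem_powerset, hS, Finset.subset_erase]
    tauto
  rw [hfilter, Finset.sum_filter]
  have step : ∀ W ∈ S.powerset,
      (if W.card = t then
        (1 : ℚ) / (1 + (max (W ∩ U H h).card (W ∩ U H h').card : ℚ)) else 0)
      = (fun x y z : Finset (Finset (Fin H)) =>
          if x.card + y.card + z.card = t then
            (1 : ℚ) / (1 + ((max x.card y.card : ℕ) : ℚ)) else 0)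
          (W ∩ A) (W ∩ B) (W ∩ C) := by
    intro W hW
    rw [Finset.mem_powerset] at hW
    simp only []
    rw [hUA W hW, hUB W hW, ← hWcard W hW, Nat.cast_max]
  rw [Finset.sum_congr rfl step]
  rw [show S.powerset = (A ∪ B ∪ C).powerset by rw [← hSABC]]
  rw [aux_sum_powerset_three A B C hdisjAB hdisjAC hdisjBC
    (fun x y z => if x.card + y.card + z.card = t then
      (1 : ℚ) / (1 + ((max x.card y.card : ℕ) : ℚ)) else 0)]
  have inner : ∀ x y : Finset (Finset (Fin H)),
      ∑ z ∈ C.powerset, (if x.card + y.card + z.card = t then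
          (1 : ℚ) / (1 + ((max x.card y.card : ℕ) : ℚ)) else 0)
      = (chooseInt C.card ((t : ℤ) - x.card - y.card) : ℚ) *
          ((1 : ℚ) / (1 + ((max x.card y.card : ℕ) : ℚ))) := by
    intro x y
    rw [← aux_sum_powerset_ite C ((t : ℤ) - x.card - y.card)]
    refine Finset.sum_congr rfl fun z _ => ?_
    refine if_congr ?_ rfl rfl
    omega
  have step2 : ∀ x ∈ A.powerset,
      (∑ y ∈ B.powerset, ∑ z ∈ C.powerset, (if x.card + y.card + z.card = t then
          (1 : ℚ) / (1 + ((max x.card y.card : ℕ) : ℚ)) else 0))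
      = ∑ b ∈ Finset.range (B.card + 1), (B.card.choose b : ℚ) *
          ((chooseInt C.card ((t : ℤ) - x.card - b) : ℚ) *
            ((1 : ℚ) / (1 + ((max x.card b : ℕ) : ℚ)))) := by
    intro x _
    rw [Finset.sum_congr rfl (fun y _ => inner x y)]
    exact aux_sum_powerset_card B (fun b => (chooseInt C.card ((t : ℤ) - x.card - b) : ℚ) *
      ((1 : ℚ) / (1 + ((max x.card b : ℕ) : ℚ))))
  rw [Finset.sum_congr rfl step2]
  rw [aux_sum_powerset_card A (fun a => ∑ b ∈ Finset.range (B.card + 1),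
    (B.card.choose b : ℚ) * ((chooseInt C.card ((t : ℤ) - a - b) : ℚ) *
      ((1 : ℚ) / (1 + ((max a b : ℕ) : ℚ)))))]
  rw [hAcard, hBcard, hCcard]
  rw [aux_final (H - 2) ((H - 2).choose 2) t]
  rfl
end

section
/- Let H ≥ 2, t ≥ 0 and b1 ≥ 0 be integers, and let A, B, C be pairwise disjoint finite sets with |A| = |B| = H−2 and |C| = C(H−2, 2). Then the number of subsets W of A∪B∪C with |W| = t and max(|W∩A|, |W∩B|) = b1 equals C(H−2,b1)²·C(C(H−2,2), t−2·b1) + 2·∑_{b2=0}^{b1−1} C(H−2,b1)·C(H−2,b2)·C(C(H−2,2), t−b1−b2). -/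
open Finset

private lemma sum_powerset_union_aux {α : Type*} [DecidableEq α] {s t : Finset α}
    (h : Disjoint s t) (f : Finset α → ℕ) :
    ∑ u ∈ (s ∪ t).powerset, f u = ∑ a ∈ s.powerset, ∑ b ∈ t.powerset, f (a ∪ b) := by
  rw [← Finset.sum_product']
  refine Finset.sum_bij' (fun u _ => (u ∩ s, u ∩ t)) (fun p _ => p.1 ∪ p.2) ?_ ?_ ?_ ?_ ?_
  · intro u hu
    simp only [Finset.mem_product, Finset.mem_powerset]
    exact ⟨Finset.inter_subset_right, Finset.inter_subset_right⟩
  · intro p hp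
    simp only [Finset.mem_product, Finset.mem_powerset] at hp ⊢
    exact Finset.union_subset (hp.1.trans Finset.subset_union_left)
      (hp.2.trans Finset.subset_union_right)
  · intro u hu
    simp only [Finset.mem_powerset] at hu
    show (u ∩ s) ∪ (u ∩ t) = u
    rw [← Finset.inter_union_distrib_left, Finset.inter_eq_left.mpr hu]
  · intro p hp
    simp only [Finset.mem_product, Finset.mem_powerset] at hp
    obtain ⟨h1, h2⟩ := hp
    have e1 : p.1 ∩ s = p.1 := Finset.inter_eq_left.mpr h1
    have e2 : p.2 ∩ s = ∅ := Finset.disjoint_iff_inter_eq_empty.mp (h.symm.mono_left h2)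
    have e3 : p.1 ∩ t = ∅ := Finset.disjoint_iff_inter_eq_empty.mp (h.mono_left h1)
    have e4 : p.2 ∩ t = p.2 := Finset.inter_eq_left.mpr h2
    simp [Finset.union_inter_distrib_right, e1, e2, e3, e4]
  · intro u hu
    simp only [Finset.mem_powerset] at hu
    show f u = f ((u ∩ s) ∪ (u ∩ t))
    rw [← Finset.inter_union_distrib_left, Finset.inter_eq_left.mpr hu]

private lemma sum_powerset_card_aux {α : Type*} [DecidableEq α] (s : Finset α) (g : ℕ → ℕ) :
    ∑ a ∈ s.powerset, g a.card = ∑ x ∈ Finset.range (s.card + 1), s.card.choose x * g x := by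
  rw [Finset.sum_powerset_apply_card]
  simp [smul_eq_mul]

private lemma chooseInt_count {α : Type*} [DecidableEq α] (C : Finset α) (x t : ℕ) :
    ∑ c ∈ C.powerset, (if x + c.card = t then 1 else 0)
      = chooseInt C.card ((t : ℤ) - x) := by
  rw [← Finset.card_filter]
  unfold chooseInt
  by_cases hxt : x ≤ t
  · have : C.powerset.filter (fun c => x + c.card = t) = C.powersetCard (t - x) := by
      rw [Finset.powersetCard_eq_filter]
      apply Finset.filter_congr
      intro c _
      constructor <;> intro h <;> omega
    rw [this, Finset.card_powersetCard]
    rw [if_pos (by omega)]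
    congr 1
    omega
  · rw [if_neg (by omega)]
    rw [Finset.card_eq_zero, Finset.filter_eq_empty_iff]
    intro c _
    omega

theorem stmt_2 {α : Type*} [DecidableEq α] (H t b1 : ℕ) (hH : 2 ≤ H)
    (A B C : Finset α)
    (hAB : Disjoint A B) (hAC : Disjoint A C) (hBC : Disjoint B C)
    (hA : A.card = H - 2) (hB : B.card = H - 2) (hC : C.card = (H - 2).choose 2) :
    ((A ∪ B ∪ C).powerset.filter
        (fun W => W.card = t ∧ max (W ∩ A).card (W ∩ B).card = b1)).card
      = ((H - 2).choose b1) ^ 2 * chooseInt ((H - 2).choose 2) ((t : ℤ) - 2 * b1)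
        + 2 * ∑ b2 ∈ Finset.range b1,
            (H - 2).choose b1 * (H - 2).choose b2 *
              chooseInt ((H - 2).choose 2) ((t : ℤ) - b1 - b2) := by
  set n := H - 2 with hn
  set K := n.choose 2 with hK
  set g : ℕ → ℕ := fun s => chooseInt K ((t : ℤ) - s) with hg
  -- Step 1: expand as triple sum over powersets
  rw [Finset.card_filter]
  rw [sum_powerset_union_aux (Finset.disjoint_union_left.mpr ⟨hAC, hBC⟩)]
  rw [sum_powerset_union_aux hAB]
  -- Step 2: simplify the condition for a ⊆ A, b ⊆ B, c ⊆ C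
  have step2 : ∀ a ∈ A.powerset, ∀ b ∈ B.powerset, ∀ c ∈ C.powerset,
      (if (a ∪ b ∪ c).card = t ∧
          max ((a ∪ b ∪ c) ∩ A).card ((a ∪ b ∪ c) ∩ B).card = b1 then 1 else 0)
        = if a.card + b.card + c.card = t ∧ max a.card b.card = b1 then 1 else 0 := by
    intro a ha b hb c hc
    rw [Finset.mem_powerset] at ha hb hc
    have dab : Disjoint a b := hAB.mono ha hb
    have dac : Disjoint a c := hAC.mono ha hc
    have dbc : Disjoint b c := hBC.mono hb hc
    have eA : (a ∪ b ∪ c) ∩ A = a := by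
      rw [Finset.union_inter_distrib_right, Finset.union_inter_distrib_right,
        Finset.inter_eq_left.mpr ha,
        Finset.disjoint_iff_inter_eq_empty.mp ((hAB.symm.mono_left hb)),
        Finset.disjoint_iff_inter_eq_empty.mp ((hAC.symm.mono_left hc))]
      simp
    have eB : (a ∪ b ∪ c) ∩ B = b := by
      rw [Finset.union_inter_distrib_right, Finset.union_inter_distrib_right,
        Finset.inter_eq_left.mpr hb,
        Finset.disjoint_iff_inter_eq_empty.mp ((hAB.mono_left ha)),
        Finset.disjoint_iff_inter_eq_empty.mp ((hBC.symm.mono_left hc))]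
      simp
    have ecard : (a ∪ b ∪ c).card = a.card + b.card + c.card := by
      rw [Finset.card_union_of_disjoint (by
        simpa using Finset.disjoint_union_left.mpr ⟨dac, dbc⟩),
        Finset.card_union_of_disjoint dab]
    rw [eA, eB, ecard]
  rw [Finset.sum_congr rfl (fun a ha => Finset.sum_congr rfl (fun b hb =>
    Finset.sum_congr rfl (fun c hc => step2 a ha b hb c hc)))]
  have gval : ∀ s : ℕ, g s = chooseInt K ((t : ℤ) - s) := fun s => rfl
  -- Step 3: sum over c
  have step3 : ∀ a ∈ A.powerset, ∀ b ∈ B.powerset,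
      ∑ c ∈ C.powerset,
        (if a.card + b.card + c.card = t ∧ max a.card b.card = b1 then 1 else 0)
      = if max a.card b.card = b1 then g (a.card + b.card) else 0 := by
    intro a _ b _
    by_cases hmax : max a.card b.card = b1
    · rw [if_pos hmax]
      have : ∀ c : Finset α,
          (if a.card + b.card + c.card = t ∧ max a.card b.card = b1 then 1 else 0)
          = (if (a.card + b.card) + c.card = t then 1 else 0) := by
        intro c; simp [hmax]
      rw [Finset.sum_congr rfl (fun c _ => this c), chooseInt_count C (a.card + b.card) t,
        hC, gval]
    · simp [hmax]
  rw [Finset.sum_congr rfl (fun a ha => Finset.sum_congr rfl (fun b hb => step3 a ha b hb))]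
  -- Step 4: convert powerset sums to range sums
  have step4 : ∑ a ∈ A.powerset, ∑ b ∈ B.powerset,
      (if max a.card b.card = b1 then g (a.card + b.card) else 0)
      = ∑ x ∈ Finset.range (n + 1), n.choose x *
          ∑ y ∈ Finset.range (n + 1), n.choose y *
            (if max x y = b1 then g (x + y) else 0) := by
    rw [sum_powerset_card_aux A
      (fun x => ∑ b ∈ B.powerset, (if max x b.card = b1 then g (x + b.card) else 0)), hA]
    refine Finset.sum_congr rfl fun x _ => ?_
    congr 1
    rw [sum_powerset_card_aux B (fun y => if max x y = b1 then g (x + y) else 0), hB]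
  rw [step4]
  -- Step 5: final combinatorial identity
  by_cases hb1 : b1 ≤ n
  · have inner_b1 : ∑ y ∈ Finset.range (n + 1), n.choose y *
          (if max b1 y = b1 then g (b1 + y) else 0)
        = ∑ y ∈ Finset.range (b1 + 1), n.choose y * g (b1 + y) := by
      have : ∀ y, n.choose y * (if max b1 y = b1 then g (b1 + y) else 0)
          = if y ≤ b1 then n.choose y * g (b1 + y) else 0 := by
        intro y
        by_cases h : y ≤ b1
        · rw [if_pos h, if_pos (by omega)]
        · rw [if_neg h, if_neg (by omega), mul_zero]
      rw [Finset.sum_congr rfl fun y _ => this y, ← Finset.sum_filter]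
      congr 1
      ext y
      simp only [Finset.mem_filter, Finset.mem_range]
      omega
    have inner_ne : ∀ x, x ≠ b1 → ∑ y ∈ Finset.range (n + 1), n.choose y *
          (if max x y = b1 then g (x + y) else 0)
        = if x < b1 then n.choose b1 * g (x + b1) else 0 := by
      intro x hx
      by_cases hlt : x < b1
      · rw [if_pos hlt]
        rw [Finset.sum_eq_single_of_mem b1 (Finset.mem_range.mpr (by omega))]
        · rw [if_pos (by omega)]
        · intro y _ hy
          rw [if_neg (by omega), mul_zero]
      · rw [if_neg hlt]
        apply Finset.sum_eq_zero
        intro y hy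
        rw [Finset.mem_range] at hy
        rw [if_neg (by omega), mul_zero]
    rw [← Finset.add_sum_erase _ _ (Finset.mem_range.mpr (by omega : b1 < n + 1)),
      inner_b1]
    have rest : ∑ x ∈ (Finset.range (n + 1)).erase b1, n.choose x *
          (∑ y ∈ Finset.range (n + 1), n.choose y *
            (if max x y = b1 then g (x + y) else 0))
        = ∑ x ∈ Finset.range b1, n.choose x * (n.choose b1 * g (x + b1)) := by
      rw [Finset.sum_congr rfl (fun x hx => by
        rw [inner_ne x (Finset.ne_of_mem_erase hx)])]
      rw [show (∑ x ∈ (Finset.range (n + 1)).erase b1,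
          n.choose x * (if x < b1 then n.choose b1 * g (x + b1) else 0))
        = ∑ x ∈ (Finset.range (n + 1)).erase b1,
          (if x < b1 then n.choose x * (n.choose b1 * g (x + b1)) else 0) from
        Finset.sum_congr rfl fun x _ => by split <;> simp]
      rw [← Finset.sum_filter]
      congr 1
      ext x
      simp only [Finset.mem_filter, Finset.mem_erase, Finset.mem_range]
      omega
    rw [rest]
    have harg2 : chooseInt K ((t : ℤ) - (b1 + b1 : ℕ)) = chooseInt K ((t : ℤ) - 2 * b1) := by
      congr 1; push_cast; ring
    have harg : ∀ y : ℕ, chooseInt K ((t : ℤ) - (b1 + y : ℕ))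
        = chooseInt K ((t : ℤ) - b1 - y) := by
      intro y; congr 1; push_cast; ring
    have harg' : ∀ x : ℕ, chooseInt K ((t : ℤ) - (x + b1 : ℕ))
        = chooseInt K ((t : ℤ) - b1 - x) := by
      intro x; congr 1; push_cast; ring
    have part1 : n.choose b1 * ∑ y ∈ Finset.range (b1 + 1), n.choose y * g (b1 + y)
        = n.choose b1 ^ 2 * chooseInt K ((t : ℤ) - 2 * b1)
          + ∑ y ∈ Finset.range b1,
              n.choose b1 * n.choose y * chooseInt K ((t : ℤ) - b1 - y) := by
      rw [Finset.sum_range_succ, mul_add, Finset.mul_sum, add_comm]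
      congr 1
      · rw [gval, harg2]; ring
      · exact Finset.sum_congr rfl fun y _ => by rw [gval, harg, ← mul_assoc]
    have part2 : ∑ x ∈ Finset.range b1, n.choose x * (n.choose b1 * g (x + b1))
        = ∑ y ∈ Finset.range b1,
            n.choose b1 * n.choose y * chooseInt K ((t : ℤ) - b1 - y) := by
      refine Finset.sum_congr rfl fun x _ => ?_
      rw [gval, harg']; ring
    rw [part1, part2]
    ring
  · have lz : ∀ x ∈ Finset.range (n + 1), n.choose x *
          ∑ y ∈ Finset.range (n + 1), n.choose y *
            (if max x y = b1 then g (x + y) else 0) = 0 := by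
      intro x hx
      rw [Finset.mem_range] at hx
      rw [Finset.sum_eq_zero, mul_zero]
      intro y hy
      rw [Finset.mem_range] at hy
      rw [if_neg (by omega), mul_zero]
    rw [Finset.sum_eq_zero lz]
    have hch : n.choose b1 = 0 := Nat.choose_eq_zero_of_lt (by omega)
    rw [hch]
    simp
end
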